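/- arXiv:1303.4668 — 7 statements merged into one kernel-verified Lean document; each statement's English description precedes it below -/
import Mathlib

section
/- Let T : Ω → ℂ^{n×n} be analytic and regular, let c ∈ ℂ and ρ > 0 be such that the closed disk {z : |z − c| ≤ ρ} is contained in Ω, and suppose T(z) is invertible for every z with |z − c| = ρ. Then (1/(2πi)) · ∮_{|z−c|=ρ} tr(T(z)⁻¹ · T′(z)) dz equals the number of eigenvalues of T in the open disk {z : |z − c| < ρ}, counted with multiplicity, where T′(z) denotes the entrywise complex derivative of T at z and tr denotes the matrix trace. -/
open Set Metric

open scoped Classical in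
/-- Number of zeros of `f` in `U`, counted with multiplicity (order of vanishing). -/
noncomputable def zeroCount (f : ℂ → ℂ) (U : Set ℂ) : ℕ :=
  ∑ᶠ z ∈ U, if h : AnalyticAt ℂ f z then (analyticOrderAt f z).toNat else 0

/-- Number of eigenvalues of the matrix-valued function `T` in `U`, counted with
multiplicity (order of vanishing of `det ∘ T`). -/
noncomputable def evCount {n : ℕ} (T : ℂ → Matrix (Fin n) (Fin n) ℂ) (U : Set ℂ) : ℕ :=
  zeroCount (fun z => (T z).det) U

/-- Entrywise analyticity of a matrix-valued function on a set. -/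
def MatAnalyticOn {n : ℕ} (T : ℂ → Matrix (Fin n) (Fin n) ℂ) (Ω : Set ℂ) : Prop :=
  ∀ i j, ∀ z ∈ Ω, AnalyticAt ℂ (fun w => T w i j) z

/-- Operator norm on `ℂ^{n×n}` induced by the Euclidean norm (spectral norm). -/
noncomputable def l2norm {n : ℕ} (M : Matrix (Fin n) (Fin n) ℂ) : ℝ :=
  ‖Matrix.toEuclideanCLM (𝕜 := ℂ) M‖

/-- Spectral norm of a real matrix. -/
noncomputable def l2normR {n : ℕ} (M : Matrix (Fin n) (Fin n) ℝ) : ℝ :=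
  ‖Matrix.toEuclideanCLM (𝕜 := ℝ) M‖

/-- Euclidean norm of a vector in `ℂⁿ`. -/
noncomputable def e2norm {n : ℕ} (v : Fin n → ℂ) : ℝ :=
  Real.sqrt (∑ k, ‖v k‖ ^ 2)

/-- The `ε`-pseudospectrum of an analytic matrix-valued function on `Ω`. -/
noncomputable def pspec {n : ℕ} (T : ℂ → Matrix (Fin n) (Fin n) ℂ) (Ω : Set ℂ) (ε : ℝ) :
    Set ℂ :=
  {z ∈ Ω | ¬ IsUnit (T z) ∨ ε⁻¹ < l2norm (T z)⁻¹}

/-! Jacobi's formula `(det T)' = tr (adj T · T')` identifies the integrand on the circle with the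
logarithmic derivative of `det ∘ T`, so the claim is the argument principle for this holomorphic
function. The argument principle is proved by induction on the number of zeros: a zero `z₀` in the
disk is divided out through `f = (z - z₀) · dslope f z₀`, which lowers the count by one and splits
off the summand `(z - z₀)⁻¹` of the logarithmic derivative, whose integral is `2πi`; for a function
without zeros in the closed disk the integral vanishes by Cauchy's theorem. -/

namespace Matrix

variable {𝕜 ι : Type*} [NontriviallyNormedField 𝕜] [Fintype ι] [DecidableEq ι]

variable (𝕜 ι) in
noncomputable def detContinuousMultilinear : ContinuousMultilinearMap 𝕜 (fun _ : ι => ι → 𝕜) 𝕜 where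
  toMultilinearMap := (detRowAlternating : (ι → 𝕜) [⋀^ι]→ₗ[𝕜] 𝕜).toMultilinearMap
  cont := continuous_id.matrix_det

theorem analyticAt_det {T : 𝕜 → Matrix ι ι 𝕜} {z : 𝕜}
    (hT : ∀ i j, AnalyticAt 𝕜 (fun w => T w i j) z) :
    AnalyticAt 𝕜 (fun w => (T w).det) z :=
  (detContinuousMultilinear 𝕜 ι).analyticAt.comp
    (analyticAt_pi_iff.2 fun i => analyticAt_pi_iff.2 fun j => hT i j)

theorem sum_det_updateRow_eq_trace_adjugate_mul (A B : Matrix ι ι 𝕜) :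
    ∑ k, (A.updateRow k (B k)).det = (A.adjugate * B).trace := by
  simp only [← cramer_transpose_apply, cramer_eq_adjugate_mulVec, ← adjugate_transpose, mulVec,
    dotProduct, transpose_apply, trace, diag, mul_apply]
  exact Finset.sum_comm

theorem hasDerivAt_det {T : 𝕜 → Matrix ι ι 𝕜} {T' : Matrix ι ι 𝕜} {z : 𝕜}
    (hT : ∀ i j, HasDerivAt (fun w => T w i j) (T' i j) z) :
    HasDerivAt (fun w => (T w).det) ((T z).adjugate * T').trace z := by
  have hrows : HasDerivAt (fun w i j => T w i j) (fun i j => T' i j) z :=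
    hasDerivAt_pi.2 fun i => hasDerivAt_pi.2 fun j => hT i j
  have := ((detContinuousMultilinear 𝕜 ι).hasFDerivAt _).comp_hasDerivAt z hrows
  rw [ContinuousMultilinearMap.linearDeriv_apply] at this
  rw [← sum_det_updateRow_eq_trace_adjugate_mul]
  exact this

theorem trace_inv_mul_deriv_eq_logDeriv_det {T : 𝕜 → Matrix ι ι 𝕜} {z : 𝕜}
    (hT : ∀ i j, DifferentiableAt 𝕜 (fun w => T w i j) z) :
    ((T z)⁻¹ * of fun i j => deriv (fun w => T w i j) z).trace =
      logDeriv (fun w => (T w).det) z := by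
  rw [logDeriv_apply, (hasDerivAt_det fun i j => (hT i j).hasDerivAt).deriv, inv_def, smul_mul,
    trace_smul, Ring.inverse_eq_inv', smul_eq_mul, inv_mul_eq_div]
  rfl

end Matrix

section AnalyticZeros

variable {𝕜 E : Type*} [NontriviallyNormedField 𝕜] [NormedAddCommGroup E] [NormedSpace 𝕜 E]
  {f : 𝕜 → E} {K : Set 𝕜} {x : 𝕜}

theorem AnalyticAt.dslope {a b : 𝕜} (hf : AnalyticAt 𝕜 f b) : AnalyticAt 𝕜 (dslope f a) b := by
  rcases eq_or_ne b a with rfl | hba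
  · obtain ⟨p, hp⟩ := hf
    exact ⟨_, hp.has_fpower_series_dslope_fslope⟩
  · refine AnalyticAt.congr ?_ (dslope_eventuallyEq_slope_of_ne f hba).symm
    rw [slope_fun_def]
    exact ((analyticAt_id.sub analyticAt_const).inv (sub_ne_zero.2 hba)).smul
      (hf.sub analyticAt_const)

theorem AnalyticOnNhd.analyticOrderAt_ne_top_of_ne_zero (hf : AnalyticOnNhd 𝕜 f K)
    (hK : IsPreconnected K) (hx : x ∈ K) (hfx : f x ≠ 0) {z : 𝕜} (hz : z ∈ K) :
    analyticOrderAt f z ≠ ⊤ :=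
  hf.analyticOrderAt_ne_top_of_isPreconnected hK hx hz
    (by simp [(hf x hx).analyticOrderAt_eq_zero.2 hfx])

theorem AnalyticOnNhd.finite_inter_support_analyticOrderNatAt (hf : AnalyticOnNhd 𝕜 f K)
    (hK : IsCompact K) (hKc : IsConnected K) (hx : x ∈ K) (hfx : f x ≠ 0) {U : Set 𝕜}
    (hUK : U ⊆ K) : (U ∩ Function.support (analyticOrderNatAt f)).Finite := by
  refine (hK.finite_sdiff_of_mem_codiscreteWithin
    (hf.preimage_zero_mem_codiscreteWithin hfx hx hKc)).subset fun z hz => ⟨hUK hz.1, ?_⟩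
  simpa using apply_eq_zero_of_analyticOrderNatAt_ne_zero hz.2

end AnalyticZeros

section LogDeriv

variable {𝕜 : Type*} [NontriviallyNormedField 𝕜] {f : 𝕜 → 𝕜}

theorem eq_sub_mul_dslope_of_eq_zero {a : 𝕜} (hf : f a = 0) : f = (· - a) * dslope f a :=
  funext fun z => (sub_smul_dslope_of_zero hf z).symm

theorem AnalyticAt.logDeriv [CompleteSpace 𝕜] {z : 𝕜} (hf : AnalyticAt 𝕜 f z) (hfz : f z ≠ 0) :
    AnalyticAt 𝕜 (logDeriv f) z :=
  hf.deriv.div hf hfz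

theorem logDeriv_sub_const_mul {a z : 𝕜} (hz : z ≠ a) (hf : DifferentiableAt 𝕜 f z)
    (hfz : f z ≠ 0) : logDeriv ((· - a) * f) z = (z - a)⁻¹ + logDeriv f z := by
  rw [Pi.mul_def, logDeriv_mul (f := (· - a)) z (sub_ne_zero.2 hz) hfz (by fun_prop) hf,
    logDeriv_apply, deriv_sub_const, deriv_id'', one_div]

end LogDeriv

section ZeroCount

variable {f g : ℂ → ℂ} {K U : Set ℂ}

theorem zeroCount_eq_finsum_analyticOrderNatAt (f : ℂ → ℂ) (U : Set ℂ) :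
    zeroCount f U = ∑ᶠ z ∈ U, analyticOrderNatAt f z := by
  refine finsum_mem_congr rfl fun z _ => ?_
  split_ifs with h
  · rfl
  · exact (analyticOrderNatAt_of_not_analyticAt h).symm

theorem exists_zero_of_zeroCount_ne_zero (h : zeroCount f U ≠ 0) : ∃ z ∈ U, f z = 0 := by
  rw [zeroCount_eq_finsum_analyticOrderNatAt] at h
  obtain ⟨z, hz, hord⟩ := exists_ne_zero_of_finsum_mem_ne_zero h
  exact ⟨z, hz, apply_eq_zero_of_analyticOrderNatAt_ne_zero hord⟩

theorem zeroCount_sub_const {z₀ : ℂ} (hz₀ : z₀ ∈ U) : zeroCount (· - z₀) U = 1 := by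
  have hsupp : U ∩ Function.support (analyticOrderNatAt (· - z₀)) = {z₀} := by
    ext z
    by_cases hz : z = z₀
    · simp [analyticOrderNatAt, hz, hz₀]
    · simp [analyticOrderNatAt, hz]
  rw [zeroCount_eq_finsum_analyticOrderNatAt, ← finsum_mem_inter_support, hsupp,
    finsum_mem_singleton]
  simp [analyticOrderNatAt]

theorem zeroCount_mul (hK : IsCompact K) (hKc : IsConnected K) (hUK : U ⊆ K)
    (hf : AnalyticOnNhd ℂ f K) (hg : AnalyticOnNhd ℂ g K)
    (hf₀ : ∃ x ∈ K, f x ≠ 0) (hg₀ : ∃ x ∈ K, g x ≠ 0) :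
    zeroCount (f * g) U = zeroCount f U + zeroCount g U := by
  obtain ⟨x, hx, hfx⟩ := hf₀
  obtain ⟨y, hy, hgy⟩ := hg₀
  simp only [zeroCount_eq_finsum_analyticOrderNatAt]
  rw [← finsum_mem_add_distrib' (hf.finite_inter_support_analyticOrderNatAt hK hKc hx hfx hUK)
    (hg.finite_inter_support_analyticOrderNatAt hK hKc hy hgy hUK)]
  refine finsum_mem_congr rfl fun z hz =>
    analyticOrderNatAt_mul (hf z (hUK hz)) (hg z (hUK hz))
      (hf.analyticOrderAt_ne_top_of_ne_zero hKc.isPreconnected hx hfx (hUK hz))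
      (hg.analyticOrderAt_ne_top_of_ne_zero hKc.isPreconnected hy hgy (hUK hz))

theorem zeroCount_eq_zeroCount_dslope_add_one (hK : IsCompact K) (hKc : IsConnected K)
    (hUK : U ⊆ K) (hf : AnalyticOnNhd ℂ f K) {x : ℂ} (hx : x ∈ K) (hfx : f x ≠ 0) {z₀ : ℂ}
    (hz₀ : z₀ ∈ U) (hfz₀ : f z₀ = 0) :
    zeroCount f U = zeroCount (dslope f z₀) U + 1 := by
  have hfac := eq_sub_mul_dslope_of_eq_zero hfz₀
  have hfx' : (x - z₀) * dslope f z₀ x ≠ 0 := by rwa [hfac] at hfx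
  rw [congrArg (zeroCount · U) hfac, zeroCount_mul hK hKc hUK (fun z _ => by fun_prop)
    (fun z hz => (hf z hz).dslope) ⟨x, hx, left_ne_zero_of_mul hfx'⟩
    ⟨x, hx, right_ne_zero_of_mul hfx'⟩, zeroCount_sub_const hz₀, add_comm]

end ZeroCount

section ArgumentPrinciple

variable {f : ℂ → ℂ} {c : ℂ} {ρ : ℝ}

theorem circleIntegral_logDeriv_eq_zero (hρ : 0 ≤ ρ) (hf : AnalyticOnNhd ℂ f (closedBall c ρ))
    (hf₀ : ∀ z ∈ closedBall c ρ, f z ≠ 0) : ∮ z in C(c, ρ), logDeriv f z = 0 :=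
  Complex.circleIntegral_eq_zero_of_differentiable_on_off_countable hρ countable_empty
    (fun z hz => ((hf z hz).logDeriv (hf₀ z hz)).continuousAt.continuousWithinAt)
    (fun z hz => ((hf z (ball_subset_closedBall hz.1)).logDeriv
      (hf₀ z (ball_subset_closedBall hz.1))).differentiableAt)

theorem circleIntegral_logDeriv_sub_const_mul (hρ : 0 ≤ ρ) (hf : AnalyticOnNhd ℂ f (sphere c ρ))
    (hf₀ : ∀ z ∈ sphere c ρ, f z ≠ 0) {z₀ : ℂ} (hz₀ : z₀ ∈ ball c ρ) :
    ∮ z in C(c, ρ), logDeriv ((· - z₀) * f) z =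
      2 * Real.pi * Complex.I + ∮ z in C(c, ρ), logDeriv f z := by
  have hne : ∀ z ∈ sphere c ρ, z ≠ z₀ := by
    rintro z hz rfl
    exact (mem_ball.1 hz₀).ne (mem_sphere.1 hz)
  have hlog : EqOn (logDeriv ((· - z₀) * f)) (fun z => (z - z₀)⁻¹ + logDeriv f z) (sphere c ρ) :=
    fun z hz => logDeriv_sub_const_mul (hne z hz) (hf z hz).differentiableAt (hf₀ z hz)
  have hint₁ : CircleIntegrable (fun z => (z - z₀)⁻¹) c ρ :=
    ContinuousOn.circleIntegrable hρ fun z hz =>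
      ((continuousAt_id.sub continuousAt_const).inv₀ (sub_ne_zero.2 (hne z hz))).continuousWithinAt
  have hint₂ : CircleIntegrable (logDeriv f) c ρ :=
    ContinuousOn.circleIntegrable hρ fun z hz =>
      ((hf z hz).logDeriv (hf₀ z hz)).continuousAt.continuousWithinAt
  rw [circleIntegral.integral_congr hρ hlog, circleIntegral.integral_add hint₁ hint₂,
    circleIntegral.integral_sub_inv_of_mem_ball hz₀]

theorem circleIntegral_logDeriv_eq_two_pi_I_mul_zeroCount (hρ : 0 < ρ)
    (hf : AnalyticOnNhd ℂ f (closedBall c ρ)) (hf₀ : ∀ z ∈ sphere c ρ, f z ≠ 0) :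
    ∮ z in C(c, ρ), logDeriv f z = 2 * Real.pi * Complex.I * zeroCount f (ball c ρ) := by
  obtain ⟨x, hx⟩ := (NormedSpace.sphere_nonempty (x := c)).2 hρ.le
  have hdslope : ∀ {f : ℂ → ℂ}, AnalyticOnNhd ℂ f (closedBall c ρ) → f x ≠ 0 →
      ∀ {z₀}, z₀ ∈ ball c ρ → f z₀ = 0 →
        zeroCount f (ball c ρ) = zeroCount (dslope f z₀) (ball c ρ) + 1 :=
    fun hf hfx => zeroCount_eq_zeroCount_dslope_add_one (isCompact_closedBall c ρ)
      (isConnected_closedBall hρ.le) ball_subset_closedBall hf (sphere_subset_closedBall hx) hfx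
  obtain ⟨N, hN⟩ : ∃ N, zeroCount f (ball c ρ) = N := ⟨_, rfl⟩
  induction N generalizing f with
  | zero =>
    rw [hN, Nat.cast_zero, mul_zero]
    refine circleIntegral_logDeriv_eq_zero hρ.le hf fun z hz hfz => ?_
    rw [← ball_union_sphere] at hz
    rcases hz with hz | hz
    · have := hdslope hf (hf₀ x hx) hz hfz
      omega
    · exact hf₀ z hz hfz
  | succ N ih =>
    obtain ⟨z₀, hz₀, hfz₀⟩ := exists_zero_of_zeroCount_ne_zero (U := ball c ρ) (f := f) (by omega)
    have hgN : zeroCount (dslope f z₀) (ball c ρ) = N := by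
      have := hdslope hf (hf₀ x hx) hz₀ hfz₀
      omega
    have hg : AnalyticOnNhd ℂ (dslope f z₀) (closedBall c ρ) := fun z hz => (hf z hz).dslope
    have hfac := eq_sub_mul_dslope_of_eq_zero hfz₀
    have hg₀ : ∀ z ∈ sphere c ρ, dslope f z₀ z ≠ 0 := fun z hz =>
      right_ne_zero_of_mul (congrFun hfac z ▸ hf₀ z hz)
    rw [hN, hfac, circleIntegral_logDeriv_sub_const_mul hρ.le
      (fun z hz => hg z (sphere_subset_closedBall hz)) hg₀ hz₀, ih hg hg₀ hgN, hgN]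
    push_cast
    ring

end ArgumentPrinciple

theorem stmt_1_general {n : ℕ} {Ω : Set ℂ}
    (T : ℂ → Matrix (Fin n) (Fin n) ℂ) (hT : MatAnalyticOn T Ω)
    (c : ℂ) (ρ : ℝ) (hρ : 0 < ρ) (hball : closedBall c ρ ⊆ Ω)
    (hinv : ∀ z : ℂ, ‖z - c‖ = ρ → IsUnit (T z)) :
    (2 * Real.pi * Complex.I)⁻¹ *
        (∮ z in C(c, ρ),
          Matrix.trace ((T z)⁻¹ * Matrix.of fun i j => deriv (fun w => T w i j) z)) =
      (evCount T (ball c ρ) : ℂ) := by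
  have hdet : AnalyticOnNhd ℂ (fun z => (T z).det) (closedBall c ρ) :=
    fun z hz => Matrix.analyticAt_det fun i j => hT i j z (hball hz)
  have hdet₀ : ∀ z ∈ sphere c ρ, (T z).det ≠ 0 := fun z hz =>
    ((Matrix.isUnit_iff_isUnit_det _).1 (hinv z (mem_sphere_iff_norm.1 hz))).ne_zero
  have htrace : EqOn
      (fun z => ((T z)⁻¹ * Matrix.of fun i j => deriv (fun w => T w i j) z).trace)
      (logDeriv fun z => (T z).det) (sphere c ρ) := fun z hz =>
    Matrix.trace_inv_mul_deriv_eq_logDeriv_det fun i j =>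
      (hT i j z (hball (sphere_subset_closedBall hz))).differentiableAt
  rw [circleIntegral.integral_congr hρ.le htrace,
    circleIntegral_logDeriv_eq_two_pi_I_mul_zeroCount hρ hdet hdet₀, evCount,
    inv_mul_cancel_left₀ Complex.two_pi_I_ne_zero]

/-- the winding-number integral `(2πi)⁻¹ ∮ tr(T(z)⁻¹ T'(z)) dz` over the
circle `|z - c| = ρ` counts the eigenvalues of `T` in the open disk, with multiplicity. -/
theorem stmt_1 {n : ℕ} (hn : 0 < n) {Ω : Set ℂ} (hΩo : IsOpen Ω) (hΩc : IsConnected Ω)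
    (T : ℂ → Matrix (Fin n) (Fin n) ℂ) (hT : MatAnalyticOn T Ω)
    (hreg : ∃ z ∈ Ω, (T z).det ≠ 0)
    (c : ℂ) (ρ : ℝ) (hρ : 0 < ρ) (hball : closedBall c ρ ⊆ Ω)
    (hinv : ∀ z : ℂ, ‖z - c‖ = ρ → IsUnit (T z)) :
    (2 * Real.pi * Complex.I)⁻¹ *
        (∮ z in C(c, ρ),
          Matrix.trace ((T z)⁻¹ * Matrix.of fun i j => deriv (fun w => T w i j) z)) =
      (evCount T (ball c ρ) : ℂ) :=
  stmt_1_general T hT c ρ hρ hball hinv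
end

section
/- Suppose T(z) = D(z) + E(z), where D, E : Ω → ℂ^{n×n} are analytic and D(z) is diagonal for every z ∈ Ω, and fix α ∈ [0,1]. If λ ∈ Ω satisfies det(T(λ)) = 0, then there exists an index j such that |d_jj(λ)| ≤ r_j(λ)^α · c_j(λ)^{1−α}; that is, every eigenvalue of T lies in the union of the generalized Gershgorin regions G_1^α, …, G_n^α. -/
open Set Metric

/-!
Take a null vector `v` of `D + E` and put `u_j = ‖v_j‖`, `a_jk = ‖E_jk‖`, so that
`‖d_jj‖ u_j ≤ ∑ₖ a_jk u_k` for every row. For `α = 1`, a row `j` where `u` is maximal gives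
`‖d_jj‖ ≤ r_j`. For `α < 1` put `p = (1 - α)⁻¹`; Hölder's inequality with weights
`a_jk` gives `‖d_jj‖ u_j ≤ r_j ^ α (∑ₖ a_jk u_k ^ p) ^ (1 - α)`, so if every `‖d_jj‖` exceeded
`r_j ^ α c_j ^ (1 - α)` we would get `c_j u_j ^ p ≤ ∑ₖ a_jk u_k ^ p`, strictly where `u_j > 0`.
Summing over `j`, both sides equal `∑ₖ c_k u_k ^ p`, a contradiction.
-/

section Ostrowski

open Finset

variable {ι : Type*} [Fintype ι] {a : ι → ι → ℝ} {d u : ι → ℝ}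

lemma mul_rpow_lt_of_rpow_mul_rpow_lt {r c d x S α : ℝ} (hr : 0 ≤ r) (hc : 0 ≤ c) (hS : 0 ≤ S)
    (hx : 0 < x) (hα : α < 1) (hlt : r ^ α * c ^ (1 - α) < d)
    (hle : d * x ≤ r ^ α * S ^ (1 - α)) :
    c * x ^ (1 - α)⁻¹ < S := by
  have hp : 0 < (1 - α)⁻¹ := inv_pos.2 (sub_pos.2 hα)
  have hbase : c ^ (1 - α) * x < S ^ (1 - α) := by
    refine lt_of_mul_lt_mul_left ?_ (Real.rpow_nonneg hr α)
    calc r ^ α * (c ^ (1 - α) * x) = r ^ α * c ^ (1 - α) * x := by ring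
      _ < d * x := by gcongr
      _ ≤ r ^ α * S ^ (1 - α) := hle
  have := Real.rpow_lt_rpow (by positivity) hbase hp
  rwa [Real.mul_rpow (by positivity) hx.le, Real.rpow_rpow_inv hc (sub_pos.2 hα).ne',
    Real.rpow_rpow_inv hS (sub_pos.2 hα).ne'] at this

lemma exists_le_sum_of_mul_le_sum_mul (ha : ∀ j k, 0 ≤ a j k) (hu : ∀ j, 0 ≤ u j) (hu0 : u ≠ 0)
    (hdu : ∀ j, d j * u j ≤ ∑ k, a j k * u k) :
    ∃ j, d j ≤ ∑ k, a j k := by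
  have : Nonempty ι := not_isEmpty_iff.1 fun _ ↦ hu0 (Subsingleton.elim _ _)
  obtain ⟨j, -, hmax⟩ := exists_max_image univ u univ_nonempty
  have hj : 0 < u j := by
    obtain ⟨i, hi⟩ := Function.ne_iff.1 hu0
    exact ((hu i).lt_of_ne' hi).trans_le (hmax i (mem_univ i))
  refine ⟨j, le_of_mul_le_mul_right ?_ hj⟩
  calc d j * u j ≤ ∑ k, a j k * u k := hdu j
    _ ≤ ∑ k, a j k * u j := by gcongr with k; exacts [ha j k, hmax k (mem_univ k)]
    _ = (∑ k, a j k) * u j := (sum_mul ..).symm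

lemma exists_le_rpow_mul_rpow_of_mul_le_sum_mul_of_lt_one (ha : ∀ j k, 0 ≤ a j k)
    (hu : ∀ j, 0 ≤ u j) (hu0 : u ≠ 0) (hdu : ∀ j, d j * u j ≤ ∑ k, a j k * u k)
    {α : ℝ} (hα₀ : 0 ≤ α) (hα₁ : α < 1) :
    ∃ j, d j ≤ (∑ k, a j k) ^ α * (∑ i, a i j) ^ (1 - α) := by
  by_contra! hlt
  set p := (1 - α)⁻¹
  have hp : 1 ≤ p := one_le_inv₀ (sub_pos.2 hα₁) |>.2 (by linarith)
  have hS : ∀ j, 0 ≤ ∑ k, a j k * u k ^ p := fun j ↦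
    sum_nonneg fun k _ ↦ mul_nonneg (ha j k) (Real.rpow_nonneg (hu k) p)
  have hholder : ∀ j, d j * u j ≤ (∑ k, a j k) ^ α * (∑ k, a j k * u k ^ p) ^ (1 - α) := by
    intro j
    have := Real.inner_le_weight_mul_Lp_of_nonneg univ hp (a j) u (ha j) hu
    rw [inv_inv, sub_sub_cancel] at this
    exact (hdu j).trans this
  have hrow : ∀ j, 0 < u j → (∑ i, a i j) * u j ^ p < ∑ k, a j k * u k ^ p := fun j hj ↦
    mul_rpow_lt_of_rpow_mul_rpow_lt (sum_nonneg fun k _ ↦ ha j k)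
      (sum_nonneg fun i _ ↦ ha i j) (hS j) hj hα₁ (hlt j) (hholder j)
  have hrow_le : ∀ j, (∑ i, a i j) * u j ^ p ≤ ∑ k, a j k * u k ^ p := by
    intro j
    rcases (hu j).eq_or_lt' with hj | hj
    · rw [hj, Real.zero_rpow (by positivity), mul_zero]
      exact hS j
    · exact (hrow j hj).le
  obtain ⟨j₀, hj₀⟩ := Function.ne_iff.1 hu0
  have hlt_sum : ∑ j, (∑ i, a i j) * u j ^ p < ∑ j, ∑ k, a j k * u k ^ p :=
    sum_lt_sum (fun j _ ↦ hrow_le j) ⟨j₀, mem_univ _, hrow j₀ ((hu j₀).lt_of_ne' hj₀)⟩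
  have hswap : ∑ j, ∑ k, a j k * u k ^ p = ∑ k, (∑ i, a i k) * u k ^ p := by
    rw [sum_comm]
    simp only [sum_mul]
  exact (hlt_sum.trans_eq hswap).false

theorem exists_le_rpow_mul_rpow_of_mul_le_sum_mul (ha : ∀ j k, 0 ≤ a j k) (hu : ∀ j, 0 ≤ u j)
    (hu0 : u ≠ 0) (hdu : ∀ j, d j * u j ≤ ∑ k, a j k * u k) {α : ℝ} (hα : α ∈ Set.Icc 0 1) :
    ∃ j, d j ≤ (∑ k, a j k) ^ α * (∑ i, a i j) ^ (1 - α) := by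
  rcases hα.2.lt_or_eq with hα₁ | rfl
  · exact exists_le_rpow_mul_rpow_of_mul_le_sum_mul_of_lt_one ha hu hu0 hdu hα.1 hα₁
  · simpa using exists_le_sum_of_mul_le_sum_mul ha hu hu0 hdu

end Ostrowski

namespace Matrix

variable {ι 𝕜 : Type*} [Fintype ι] [DecidableEq ι] [NormedField 𝕜] {D E : Matrix ι ι 𝕜}

lemma exists_ne_zero_norm_diag_mul_le_of_det_add_eq_zero (hD : D.IsDiag)
    (hdet : (D + E).det = 0) :
    ∃ v : ι → 𝕜, v ≠ 0 ∧ ∀ j, ‖D j j‖ * ‖v j‖ ≤ ∑ k, ‖E j k‖ * ‖v k‖ := by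
  obtain ⟨v, hv, hDEv⟩ := exists_mulVec_eq_zero_iff.2 hdet
  refine ⟨v, hv, fun j ↦ ?_⟩
  have hrow : D j j * v j = -(E *ᵥ v) j := by
    have := congrFun hDEv j
    rw [add_mulVec, Pi.add_apply, ← hD.diagonal_diag, mulVec_diagonal] at this
    simpa [eq_neg_iff_add_eq_zero] using this
  calc ‖D j j‖ * ‖v j‖ = ‖(E *ᵥ v) j‖ := by rw [← norm_mul, hrow, norm_neg]
    _ ≤ ∑ k, ‖E j k * v k‖ := norm_sum_le _ _
    _ = ∑ k, ‖E j k‖ * ‖v k‖ := by simp_rw [norm_mul]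

theorem exists_norm_diag_le_rpow_mul_rpow_of_det_add_eq_zero (hD : D.IsDiag)
    (hdet : (D + E).det = 0) {α : ℝ} (hα : α ∈ Set.Icc 0 1) :
    ∃ j, ‖D j j‖ ≤ (∑ k, ‖E j k‖) ^ α * (∑ i, ‖E i j‖) ^ (1 - α) := by
  obtain ⟨v, hv, hdv⟩ := exists_ne_zero_norm_diag_mul_le_of_det_add_eq_zero hD hdet
  refine exists_le_rpow_mul_rpow_of_mul_le_sum_mul (fun _ _ ↦ norm_nonneg _)
    (fun _ ↦ norm_nonneg _) ?_ hdv hα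
  exact fun h ↦ hv (funext fun j ↦ norm_eq_zero.1 (congrFun h j))

end Matrix

theorem stmt_2_general {n : ℕ} {Ω : Set ℂ}
    (D E : ℂ → Matrix (Fin n) (Fin n) ℂ)
    (hdiag : ∀ z ∈ Ω, ∀ i j, i ≠ j → D z i j = 0)
    (α : ℝ) (hα : α ∈ Icc (0:ℝ) 1)
    (lam : ℂ) (hlam : lam ∈ Ω) (hdet : (D lam + E lam).det = 0) :
    ∃ j, ‖D lam j j‖ ≤
      (∑ k, ‖E lam j k‖) ^ α * (∑ i, ‖E lam i j‖) ^ (1 - α) :=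
  Matrix.exists_norm_diag_le_rpow_mul_rpow_of_det_add_eq_zero (hdiag lam hlam) hdet hα

/-- generalized Gershgorin theorem. Every eigenvalue of `T = D + E` lies in
one of the regions `G_j^α = {z ∈ Ω : |d_jj(z)| ≤ r_j(z)^α c_j(z)^(1-α)}`. -/
theorem stmt_2 {n : ℕ} (hn : 0 < n) {Ω : Set ℂ} (hΩo : IsOpen Ω) (hΩc : IsConnected Ω)
    (D E : ℂ → Matrix (Fin n) (Fin n) ℂ)
    (hD : MatAnalyticOn D Ω) (hE : MatAnalyticOn E Ω)
    (hdiag : ∀ z ∈ Ω, ∀ i j, i ≠ j → D z i j = 0)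
    (α : ℝ) (hα : α ∈ Icc (0:ℝ) 1)
    (lam : ℂ) (hlam : lam ∈ Ω) (hdet : (D lam + E lam).det = 0) :
    ∃ j, ‖D lam j j‖ ≤
      (∑ k, ‖E lam j k‖) ^ α * (∑ i, ‖E lam i j‖) ^ (1 - α) :=
  stmt_2_general D E hdiag α hα lam hlam hdet
end

section
/- Suppose T(z) = D(z) + E(z), where D, E : Ω → ℂ^{n×n} are analytic and D(z) is diagonal for every z ∈ Ω, fix α ∈ [0,1] and an index j, and suppose the diagonal entry d_jj does not vanish identically on Ω. If K is the closure of a bounded connected component of the generalized Gershgorin region G_j^α and K ⊆ Ω, then there exists a point z ∈ K with d_jj(z) = 0. -/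
open Set Metric

/-! Suppose `d = d_jj` has no zero on `K`. On `V = {d ≠ 0}` put
`F = r_j^α c_j^(1-α) / |d|`, so that `G_j^α ∩ V = {F ≥ 1}`. Near every point, each factor
`(∑ₖ |eₖ|)^β` is the maximum of `|u|` over analytic `u` touching it there (take
`u = (∑ₖ θₖ eₖ)^β` with constants `|θₖ| ≤ 1`), so at an interior maximum of `F` the maximum modulus
principle makes `F` locally constant; hence `F` attains its maximum over `closure W` on
`frontier W`, for any bounded open `W`. Because the component `U` is compact, a Šura-Bura
type separation gives such a `W ⊇ U` inside `V` whose frontier misses `G_j^α`. Then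
`F < 1` on `frontier W`, while `F ≥ 1` on `U`. -/

open Filter Topology

theorem closure_sep_le_inter_subset {X α : Type*} [TopologicalSpace X] [LinearOrder α]
    [TopologicalSpace α] [OrderClosedTopology α] {Ω : Set X} {f g : X → α}
    (hf : ∀ z ∈ Ω, ContinuousAt f z) (hg : ∀ z ∈ Ω, ContinuousAt g z) :
    closure {z ∈ Ω | f z ≤ g z} ∩ Ω ⊆ {z ∈ Ω | f z ≤ g z} := fun z ⟨hz, hzΩ⟩ =>
  ⟨hzΩ, ContinuousWithinAt.closure_le hz (hf z hzΩ).continuousWithinAt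
    (hg z hzΩ).continuousWithinAt fun _ hw => hw.2⟩

theorem exists_isClopen_connectedComponent_subset {X : Type*} [TopologicalSpace X]
    [CompactSpace X] [T2Space X] {x : X} {V : Set X} (hV : IsOpen V)
    (hxV : connectedComponent x ⊆ V) :
    ∃ A : Set X, IsClopen A ∧ connectedComponent x ⊆ A ∧ A ⊆ V := by
  have hdisj : Vᶜ ∩ ⋂ s : { s : Set X // IsClopen s ∧ x ∈ s }, (s : Set X) = ∅ := by
    rw [← connectedComponent_eq_iInter_isClopen]
    exact eq_empty_of_forall_notMem fun y hy => hy.1 (hxV hy.2)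
  obtain ⟨u, hu⟩ := hV.isClosed_compl.isCompact.elim_finite_subfamily_closed _
    (fun s => s.2.1.isClosed) hdisj
  refine ⟨⋂ s ∈ u, (s : Set X), isClopen_biInter_finset fun s _ => s.2.1,
    subset_iInter₂ fun s _ => s.2.1.connectedComponent_subset s.2.2, fun y hy => ?_⟩
  by_contra hyV
  exact (eq_empty_iff_forall_notMem.mp hu y) ⟨hyV, hy⟩

theorem IsCompact.exists_isOpen_disjoint_frontier_of_connectedComponentIn_subset
    {E : Type*} [MetricSpace E] [ProperSpace E] {X V : Set E} (hX : IsCompact X) {x : E}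
    (hx : x ∈ X) (hV : IsOpen V) (hXV : connectedComponentIn X x ⊆ V) :
    ∃ W, IsOpen W ∧ connectedComponentIn X x ⊆ W ∧ IsCompact (closure W) ∧
      closure W ⊆ V ∧ Disjoint (frontier W) X := by
  have := isCompact_iff_compactSpace.mp hX
  rw [connectedComponentIn_eq_image hx] at hXV ⊢
  obtain ⟨A, hA, hxA, hAV⟩ :=
    exists_isClopen_connectedComponent_subset (hV.preimage continuous_subtype_val)
      (image_subset_iff.mp hXV)
  have hAc : IsCompact ((↑) '' A : Set E) := hA.isClosed.isCompact.image continuous_subtype_val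
  have hBc : IsCompact ((↑) '' Aᶜ : Set E) :=
    hA.compl.isClosed.isCompact.image continuous_subtype_val
  obtain ⟨ρ, hρ, hρV⟩ := hAc.exists_cthickening_subset_open
    (hV.inter hBc.isClosed.isOpen_compl) (by
      rintro _ ⟨a, ha, rfl⟩
      refine ⟨hAV ha, ?_⟩
      rintro ⟨b, hb, hba⟩
      rw [Subtype.val_injective hba] at hb
      exact hb ha)
  have hcl : closure (thickening ρ ((↑) '' A)) ⊆ V ∩ ((↑) '' Aᶜ)ᶜ :=
    (closure_thickening_subset_cthickening ρ _).trans hρV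
  refine ⟨thickening ρ ((↑) '' A), ?_, ?_, ?_, ?_, ?_⟩
  · exact isOpen_thickening
  · exact (image_mono hxA).trans (self_subset_thickening hρ _)
  · exact hAc.cthickening.of_isClosed_subset isClosed_closure
      (closure_thickening_subset_cthickening ρ _)
  · exact hcl.trans inter_subset_left
  refine disjoint_left.mpr fun y hy hyX => ?_
  rw [isOpen_thickening.frontier_eq] at hy
  by_cases hyA : (⟨y, hyX⟩ : X) ∈ A
  · exact hy.2 (self_subset_thickening hρ _ ⟨_, hyA, rfl⟩)
  · exact (hcl hy.1).2 ⟨_, hyA, rfl⟩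

theorem exists_isOpen_disjoint_frontier_of_isBounded_connectedComponentIn
    {E : Type*} [MetricSpace E] [ProperSpace E] {Ω G V : Set E} (hΩ : IsOpen Ω)
    (hG : closure G ∩ Ω ⊆ G) {x : E} (hx : x ∈ G)
    (hb : Bornology.IsBounded (connectedComponentIn G x))
    (hcl : closure (connectedComponentIn G x) ⊆ Ω) (hV : IsOpen V)
    (hGV : connectedComponentIn G x ⊆ V) :
    ∃ W, IsOpen W ∧ connectedComponentIn G x ⊆ W ∧ IsCompact (closure W) ∧
      closure W ⊆ V ∧ Disjoint (frontier W) G := by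
  set U := connectedComponentIn G x
  have hUc : IsCompact U := by
    refine hb.isCompact_closure.of_isClosed_subset ?_ subset_closure
    refine closure_subset_iff_isClosed.mp <|
      isPreconnected_connectedComponentIn.closure.subset_connectedComponentIn
        (subset_closure (mem_connectedComponentIn hx)) fun z hz => hG ⟨?_, hcl hz⟩
    exact closure_mono (connectedComponentIn_subset G x) hz
  obtain ⟨δ, hδ, hδΩ⟩ := hUc.exists_cthickening_subset_open hΩ (subset_closure.trans hcl)
  have hUC : U ⊆ interior (cthickening δ U) :=
    (self_subset_thickening hδ U).trans (thickening_subset_interior_cthickening δ U)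
  have hX : IsCompact (G ∩ cthickening δ U) := by
    refine hUc.cthickening.of_isClosed_subset ?_ inter_subset_right
    refine closure_subset_iff_isClosed.mp fun z hz => ?_
    have hzC := (closure_minimal inter_subset_right isClosed_cthickening) hz
    exact ⟨hG ⟨closure_mono inter_subset_left hz, hδΩ hzC⟩, hzC⟩
  have hUX : connectedComponentIn (G ∩ cthickening δ U) x = U :=
    (connectedComponentIn_mono x inter_subset_left).antisymm <|
      isPreconnected_connectedComponentIn.subset_connectedComponentIn
        (mem_connectedComponentIn hx)
        (subset_inter (connectedComponentIn_subset G x) (hUC.trans interior_subset))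
  obtain ⟨W, hWo, hUW, hWc, hWV, hWX⟩ :=
    hX.exists_isOpen_disjoint_frontier_of_connectedComponentIn_subset
      (V := V ∩ interior (cthickening δ U))
      ⟨hx, interior_subset (hUC (mem_connectedComponentIn hx))⟩ (hV.inter isOpen_interior)
      (by rw [hUX]; exact subset_inter hGV hUC)
  refine ⟨W, hWo, hUX ▸ hUW, hWc, hWV.trans inter_subset_left, disjoint_left.mpr ?_⟩
  intro y hyW hyG
  have hyC : y ∈ cthickening δ U := interior_subset (hWV (frontier_subset_closure hyW)).2
  exact disjoint_left.mp hWX hyW ⟨hyG, hyC⟩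

section Analytic

variable {E : Type*} [NormedAddCommGroup E] [NormedSpace ℂ E]

theorem eventually_eq_of_isLocalMax_of_norm_le {F : E → ℝ} {h : E → ℂ} {z : E}
    (hh : AnalyticAt ℂ h z) (hF : IsLocalMax F z) (hle : ∀ᶠ w in 𝓝 z, ‖h w‖ ≤ F w)
    (heq : ‖h z‖ = F z) : ∀ᶠ w in 𝓝 z, F w = F z := by
  have hmax : IsLocalMax (norm ∘ h) z := by
    filter_upwards [hle, hF] with w hw hFw
    exact hw.trans (hFw.trans heq.ge)
  filter_upwards [Complex.eventually_eq_of_isLocalMax_norm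
    (hh.eventually_analyticAt.mono fun _ hw => hw.differentiableAt) hmax, hle, hF]
    with w hhw hw hFw
  exact hFw.antisymm (heq ▸ hhw ▸ hw)

theorem exists_analyticAt_norm_eq_rpow {f : E → ℂ} {z : E} (hf : AnalyticAt ℂ f z)
    (hfz : f z ≠ 0) (β : ℝ) : ∃ u : E → ℂ, AnalyticAt ℂ u z ∧ ∀ w, ‖u w‖ = ‖f w‖ ^ β := by
  refine ⟨fun w => (‖f z‖ ^ β : ℝ) * (f w / f z) ^ (β : ℂ), ?_, fun w => ?_⟩
  · refine analyticAt_const.mul ((hf.div analyticAt_const hfz).cpow analyticAt_const ?_)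
    simp [hfz]
  · have : ‖f z‖ ^ β ≠ 0 := (Real.rpow_pos_of_pos (norm_pos_iff.mpr hfz) β).ne'
    rw [norm_mul, Complex.norm_cpow_real, norm_div, Complex.norm_real, Real.norm_of_nonneg
      (by positivity), Real.div_rpow (norm_nonneg _) (norm_nonneg _), mul_div_cancel₀ _ this]

theorem exists_analyticAt_norm_le_sum_norm {ι : Type*} [Fintype ι] {e : ι → E → ℂ} {z : E}
    (he : ∀ k, AnalyticAt ℂ (e k) z) :
    ∃ f : E → ℂ, AnalyticAt ℂ f z ∧ (∀ w, ‖f w‖ ≤ ∑ k, ‖e k w‖) ∧ ‖f z‖ = ∑ k, ‖e k z‖ := by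
  -- `θ k` rotates `e k z` onto the positive real axis (`θ k = 0` if `e k z = 0`).
  set θ : ι → ℂ := fun k => (starRingEnd ℂ) (e k z) / ‖e k z‖
  have hθ : ∀ k, ‖θ k‖ ≤ 1 := fun k => by
    simp only [θ, norm_div, Complex.norm_conj, Complex.norm_real, norm_norm]
    exact div_self_le_one _
  have hθz : ∀ k, θ k * e k z = ‖e k z‖ := fun k => by
    rcases eq_or_ne (e k z) 0 with h | h
    · simp [h]
    · simp only [θ, div_mul_eq_mul_div, Complex.conj_mul']
      field_simp [norm_ne_zero_iff.mpr h]
  refine ⟨fun w => ∑ k, θ k * e k w,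
    Finset.analyticAt_fun_sum _ fun k _ => analyticAt_const.mul (he k), fun w => ?_, ?_⟩
  · refine (norm_sum_le _ _).trans (Finset.sum_le_sum fun k _ => ?_)
    rw [norm_mul]
    exact mul_le_of_le_one_left (norm_nonneg _) (hθ k)
  · simp only [hθz]
    rw [← Complex.ofReal_sum, Complex.norm_real,
      Real.norm_of_nonneg (Finset.sum_nonneg fun k _ => norm_nonneg _)]

theorem exists_analyticAt_norm_le_rpow_sum_norm {ι : Type*} [Fintype ι] {e : ι → E → ℂ}
    {z : E} {β : ℝ} (hβ : 0 ≤ β) (he : ∀ k, AnalyticAt ℂ (e k) z)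
    (hz : (∑ k, ‖e k z‖) ^ β ≠ 0) :
    ∃ u : E → ℂ, AnalyticAt ℂ u z ∧ (∀ w, ‖u w‖ ≤ (∑ k, ‖e k w‖) ^ β) ∧
      ‖u z‖ = (∑ k, ‖e k z‖) ^ β := by
  obtain ⟨f, hf, hfle, hfz⟩ := exists_analyticAt_norm_le_sum_norm he
  rcases eq_or_ne (f z) 0 with h0 | h0
  · -- then `∑ k, ‖e k z‖ = 0`, which forces `β = 0`
    have hβ0 : β = 0 := by
      by_contra hβ0
      rw [← hfz, h0, norm_zero, Real.zero_rpow hβ0] at hz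
      exact hz rfl
    exact ⟨fun _ => 1, analyticAt_const, fun w => by simp [hβ0], by simp [hβ0]⟩
  obtain ⟨u, hu, hnorm⟩ := exists_analyticAt_norm_eq_rpow hf h0 β
  exact ⟨u, hu, fun w => hnorm w ▸ Real.rpow_le_rpow (norm_nonneg _) (hfle w) hβ,
    by rw [hnorm, hfz]⟩

theorem eventually_eq_of_isLocalMax_rpow_mul_rpow_div_norm {ι κ : Type*} [Fintype ι]
    [Fintype κ] {a : ι → E → ℂ} {b : κ → E → ℂ} {d : E → ℂ} {z : E} {β γ : ℝ}
    (hβ : 0 ≤ β) (hγ : 0 ≤ γ) (ha : ∀ k, AnalyticAt ℂ (a k) z)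
    (hb : ∀ k, AnalyticAt ℂ (b k) z) (hd : AnalyticAt ℂ d z) (hdz : d z ≠ 0)
    (hmax : IsLocalMax (fun w => (∑ k, ‖a k w‖) ^ β * (∑ k, ‖b k w‖) ^ γ / ‖d w‖) z)
    (hpos : 0 < (∑ k, ‖a k z‖) ^ β * (∑ k, ‖b k z‖) ^ γ / ‖d z‖) :
    ∀ᶠ w in 𝓝 z, (∑ k, ‖a k w‖) ^ β * (∑ k, ‖b k w‖) ^ γ / ‖d w‖ =
      (∑ k, ‖a k z‖) ^ β * (∑ k, ‖b k z‖) ^ γ / ‖d z‖ := by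
  obtain ⟨haz, hbz⟩ := mul_ne_zero_iff.mp (div_ne_zero_iff.mp hpos.ne').1
  obtain ⟨u, hu, hule, huz⟩ := exists_analyticAt_norm_le_rpow_sum_norm hβ ha haz
  obtain ⟨v, hv, hvle, hvz⟩ := exists_analyticAt_norm_le_rpow_sum_norm hγ hb hbz
  refine eventually_eq_of_isLocalMax_of_norm_le ((hu.mul hv).div hd hdz) hmax
    (Eventually.of_forall fun w => ?_)
    (by simp only [Pi.div_apply, Pi.mul_apply, norm_div, norm_mul, huz, hvz])
  simp only [Pi.div_apply, Pi.mul_apply, norm_div, norm_mul]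
  exact div_le_div_of_nonneg_right
    (mul_le_mul (hule w) (hvle w) (norm_nonneg _) ((norm_nonneg _).trans (hule w)))
    (norm_nonneg _)

end Analytic

theorem Complex.exists_mem_frontier_isMaxOn_of_eventually_eq {F : ℂ → ℝ} {W : Set ℂ}
    (hW : IsOpen W) (hWc : IsCompact (closure W)) (hne : W.Nonempty)
    (hF : ContinuousOn F (closure W))
    (hloc : ∀ z ∈ W, IsMaxOn F (closure W) z → ∀ᶠ w in 𝓝 z, F w = F z) :
    ∃ y ∈ frontier W, IsMaxOn F (closure W) y := by
  obtain ⟨z₀, hz₀, hmax₀⟩ := hWc.exists_isMaxOn hne.closure hF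
  -- Among the maximum points, one with largest real part cannot lie in `W`.
  set A := closure W ∩ F ⁻¹' {F z₀}
  have hA : IsCompact A :=
    hWc.of_isClosed_subset (hF.preimage_isClosed_of_isClosed isClosed_closure isClosed_singleton)
      inter_subset_left
  obtain ⟨y, ⟨hyW, hyF⟩, hyre⟩ :=
    hA.exists_isMaxOn ⟨z₀, hz₀, rfl⟩ Complex.continuous_re.continuousOn
  have hymax : IsMaxOn F (closure W) y := fun w hw => (hyF : F y = F z₀) ▸ hmax₀ hw
  refine ⟨y, ?_, hymax⟩
  rw [hW.frontier_eq]
  refine ⟨hyW, fun hy => ?_⟩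
  obtain ⟨ε, hε, hball⟩ := Metric.eventually_nhds_iff.mp
    ((hloc y hy hymax).and (hW.mem_nhds hy))
  have hdist : dist (y + (ε / 2 : ℝ)) y < ε := by
    rw [dist_self_add_left, Complex.norm_real, Real.norm_of_nonneg (by positivity)]
    linarith
  obtain ⟨hF', hW'⟩ := hball hdist
  have hre : (y + (ε / 2 : ℝ)).re ≤ y.re := hyre ⟨subset_closure hW', hF'.trans hyF⟩
  rw [Complex.add_re, Complex.ofReal_re] at hre
  linarith

theorem stmt_4_general {n : ℕ} {Ω : Set ℂ} (hΩo : IsOpen Ω)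
    (D E : ℂ → Matrix (Fin n) (Fin n) ℂ)
    (hD : MatAnalyticOn D Ω) (hE : MatAnalyticOn E Ω)
    (α : ℝ) (hα : α ∈ Icc (0:ℝ) 1) (j : Fin n)
    (Gj : Set ℂ)
    (hGj : Gj = {z ∈ Ω | ‖D z j j‖ ≤
      (∑ k, ‖E z j k‖) ^ α * (∑ i, ‖E z i j‖) ^ (1 - α)})
    {U : Set ℂ} (hUcc : ∃ x ∈ Gj, U = connectedComponentIn Gj x)
    (hUb : Bornology.IsBounded U)
    (K : Set ℂ) (hK : K = closure U) (hKΩ : K ⊆ Ω) :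
    ∃ z ∈ K, D z j j = 0 := by
  obtain ⟨x, hxG, rfl⟩ := hUcc
  subst hK
  by_contra! hd
  set P : ℂ → ℝ := fun z => (∑ k, ‖E z j k‖) ^ α * (∑ i, ‖E z i j‖) ^ (1 - α)
  set F : ℂ → ℝ := fun z => P z / ‖D z j j‖
  set V := {z ∈ Ω | D z j j ≠ 0}
  have hdc : ∀ z ∈ Ω, ContinuousAt (fun w => D w j j) z := fun z hz =>
    (hD j j z hz).continuousAt
  have hPc : ∀ z ∈ Ω, ContinuousAt P z := fun z hz =>
    ((tendsto_finsetSum _ fun k _ => (hE j k z hz).continuousAt.norm).rpow_const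
      (Or.inr hα.1)).mul
    ((tendsto_finsetSum _ fun i _ => (hE i j z hz).continuousAt.norm).rpow_const
      (Or.inr (sub_nonneg.mpr hα.2)))
  have hFc : ContinuousOn F V := fun z hz =>
    ((hPc z hz.1).div (hdc z hz.1).norm (norm_ne_zero_iff.mpr hz.2)).continuousWithinAt
  have hG_iff : ∀ z ∈ V, z ∈ Gj ↔ 1 ≤ F z := fun z hz => by
    rw [one_le_div (norm_pos_iff.mpr hz.2), hGj]
    exact ⟨fun h => h.2, fun h => ⟨hz.1, h⟩⟩
  obtain ⟨W, hWo, hUW, hWc, hWV, hWG⟩ :=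
    exists_isOpen_disjoint_frontier_of_isBounded_connectedComponentIn hΩo
      (hGj ▸ closure_sep_le_inter_subset (fun z hz => (hdc z hz).norm) hPc) hxG hUb hKΩ
      (continuousOn_of_forall_continuousAt hdc |>.isOpen_inter_preimage hΩo
        isOpen_compl_singleton)
      fun z hz => ⟨hKΩ (subset_closure hz), hd z (subset_closure hz)⟩
  have hxW : x ∈ W := hUW (mem_connectedComponentIn hxG)
  have hFx : 1 ≤ F x := (hG_iff x (hWV (subset_closure hxW))).mp hxG
  obtain ⟨y, hyW, hymax⟩ := Complex.exists_mem_frontier_isMaxOn_of_eventually_eq hWo hWc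
    ⟨x, hxW⟩ (hFc.mono hWV) fun z hz hzmax => by
      obtain ⟨hzΩ, hdz⟩ := hWV (subset_closure hz)
      exact eventually_eq_of_isLocalMax_rpow_mul_rpow_div_norm hα.1 (sub_nonneg.mpr hα.2)
        (fun k => hE j k z hzΩ) (fun i => hE i j z hzΩ) (hD j j z hzΩ) hdz
        (hzmax.isLocalMax (mem_of_superset (hWo.mem_nhds hz) subset_closure))
        (one_pos.trans_le (hFx.trans (hzmax (subset_closure hxW))))
  exact (hG_iff y (hWV (frontier_subset_closure hyW))).not.mp (disjoint_left.mp hWG hyW)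
    (hFx.trans (hymax (subset_closure hxW)))

/-- if `K` is the closure of a bounded connected component of the
generalized Gershgorin region `G_j^α` and `K ⊆ Ω`, then the diagonal entry `d_jj`
has a zero in `K`. -/
theorem stmt_4 {n : ℕ} (hn : 0 < n) {Ω : Set ℂ} (hΩo : IsOpen Ω) (hΩc : IsConnected Ω)
    (D E : ℂ → Matrix (Fin n) (Fin n) ℂ)
    (hD : MatAnalyticOn D Ω) (hE : MatAnalyticOn E Ω)
    (hdiag : ∀ z ∈ Ω, ∀ i j, i ≠ j → D z i j = 0)
    (α : ℝ) (hα : α ∈ Icc (0:ℝ) 1) (j : Fin n)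
    (hdjj : ∃ z ∈ Ω, D z j j ≠ 0)
    (Gj : Set ℂ)
    (hGj : Gj = {z ∈ Ω | ‖D z j j‖ ≤
      (∑ k, ‖E z j k‖) ^ α * (∑ i, ‖E z i j‖) ^ (1 - α)})
    {U : Set ℂ} (hUcc : ∃ x ∈ Gj, U = connectedComponentIn Gj x)
    (hUb : Bornology.IsBounded U)
    (K : Set ℂ) (hK : K = closure U) (hKΩ : K ⊆ Ω) :
    ∃ z ∈ K, D z j j = 0 :=
  stmt_4_general hΩo D E hD hE α hα j Gj hGj hUcc hUb K hK hKΩ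
end

section
/- Let A ∈ ℂ^{n×n} (n ≥ 1) be invertible. Then there exists a matrix E₀ ∈ ℂ^{n×n} of rank at most one such that ‖E₀‖ = ‖A⁻¹‖⁻¹ and A + E₀ is not invertible. -/
/-!
Let `s = ‖A⁻¹‖` and let `v` be a unit vector at which `A⁻¹` attains its norm (compactness of
the unit sphere), so that `u = s⁻¹ A⁻¹ v` is a unit vector with `A u = s⁻¹ v`. The rank-one
operator `E₀ = -s⁻¹ v u*`, of norm `s⁻¹`, sends `u` to `-s⁻¹ v`, hence `(A + E₀) u = 0`.
-/

open Set Metric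

open InnerProductSpace

theorem ContinuousLinearMap.exists_norm_eq_one_norm_apply_eq_opNorm {𝕜 E F : Type*} [RCLike 𝕜]
    [NormedAddCommGroup E] [NormedSpace 𝕜 E] [ProperSpace E] [Nontrivial E]
    [SeminormedAddCommGroup F] [NormedSpace 𝕜 F] (f : E →L[𝕜] F) :
    ∃ x : E, ‖x‖ = 1 ∧ ‖f x‖ = ‖f‖ := by
  have hne : ((fun x => ‖f x‖) '' sphere (0 : E) 1).Nonempty :=
    (NormedSpace.sphere_nonempty_rclike 𝕜 zero_le_one).elim fun x => ⟨_, x.1, x.2, rfl⟩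
  have hcpt : IsCompact ((fun x => ‖f x‖) '' sphere (0 : E) 1) :=
    (isCompact_sphere 0 1).image (by fun_prop)
  obtain ⟨x, hx, hfx⟩ := hcpt.sSup_mem hne
  exact ⟨x, mem_sphere_zero_iff_norm.mp hx, hfx.trans f.sSup_sphere_eq_norm⟩

section

variable {𝕜 E : Type*} [RCLike 𝕜] [NormedAddCommGroup E] [InnerProductSpace 𝕜 E]
  [FiniteDimensional 𝕜 E] [Nontrivial E]

theorem exists_norm_rankOne_eq_inv_opNorm_not_isUnit_add {T S : E →L[𝕜] E} (hTS : T * S = 1) :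
    ∃ x y : E, ‖rankOne 𝕜 x y‖ = ‖S‖⁻¹ ∧ ¬IsUnit (T + rankOne 𝕜 x y) := by
  have := FiniteDimensional.proper_rclike 𝕜 E
  obtain ⟨v, hv, hSv⟩ := S.exists_norm_eq_one_norm_apply_eq_opNorm
  have hS : 0 < ‖S‖ :=
    norm_pos_iff.mpr fun h => one_ne_zero (α := E →L[𝕜] E) (by simpa [h] using hTS.symm)
  set s := ‖S‖
  set u : E := (s⁻¹ : 𝕜) • S v
  have hu : ‖u‖ = 1 := by simp [u, norm_smul, hSv, abs_of_pos hS, hS.ne']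
  have hTu : T u = (s⁻¹ : 𝕜) • v := by
    have hTSv : T (S v) = v := congrArg (· v) hTS
    simp [u, hTSv]
  refine ⟨-(s⁻¹ : 𝕜) • v, u, by simp [norm_smul, hv, hu, hS.le], fun hunit => ?_⟩
  have hker : (T + rankOne 𝕜 (-(s⁻¹ : 𝕜) • v) u) u = 0 := by
    simp [hTu, inner_self_eq_norm_sq_to_K, hu]
  have hu0 : u ≠ 0 := norm_ne_zero_iff.mp (by simp [hu])
  exact hu0 ((ContinuousLinearMap.isUnit_iff_bijective.mp hunit).injective (by simpa using hker))

end

theorem Matrix.toEuclideanCLM_symm_toEuclideanLin {𝕜 n : Type*} [RCLike 𝕜] [Fintype n]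
    [DecidableEq n] (f : EuclideanSpace 𝕜 n →L[𝕜] EuclideanSpace 𝕜 n) :
    toEuclideanCLM (𝕜 := 𝕜) (toEuclideanLin.symm (f : EuclideanSpace 𝕜 n →ₗ[𝕜] _)) = f :=
  ContinuousLinearMap.coe_injective <| by
    rw [coe_toEuclideanCLM_eq_toEuclideanLin, LinearEquiv.apply_symm_apply]

/-- for an invertible matrix `A` there is a rank-one (at most) perturbation
`E₀` with `‖E₀‖ = ‖A⁻¹‖⁻¹` making `A + E₀` singular. -/
theorem stmt_7 {n : ℕ} (hn : 0 < n) (A : Matrix (Fin n) (Fin n) ℂ) (hA : IsUnit A) :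
    ∃ E₀ : Matrix (Fin n) (Fin n) ℂ,
      E₀.rank ≤ 1 ∧ l2norm E₀ = (l2norm A⁻¹)⁻¹ ∧ ¬ IsUnit (A + E₀) := by
  have : Nonempty (Fin n) := ⟨⟨0, hn⟩⟩
  have hAA : Matrix.toEuclideanCLM (𝕜 := ℂ) A * Matrix.toEuclideanCLM (𝕜 := ℂ) A⁻¹ = 1 := by
    rw [← map_mul, Matrix.mul_nonsing_inv A ((Matrix.isUnit_iff_isUnit_det A).mp hA), map_one]
  obtain ⟨x, y, hnorm, hsing⟩ := exists_norm_rankOne_eq_inv_opNorm_not_isUnit_add hAA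
  have hCLM := Matrix.toEuclideanCLM_symm_toEuclideanLin (rankOne ℂ x y)
  refine ⟨Matrix.toEuclideanLin.symm (rankOne ℂ x y : _ →ₗ[ℂ] _), ?_, ?_, fun h => hsing ?_⟩
  · rw [symm_toEuclideanLin_rankOne]
    exact Matrix.rank_vecMulVec_le _ _
  · rw [l2norm, hCLM, hnorm, l2norm]
  · simpa [hCLM] using h.map (Matrix.toEuclideanCLM (n := Fin n) (𝕜 := ℂ))
end

section
/- Let T : Ω → ℂ^{n×n} be analytic and let ε > 0. If U is a bounded connected component of the ε-pseudospectrum Λ_ε(T) whose closure is contained in Ω, then U contains an eigenvalue of T, i.e., there exists λ ∈ U with det(T(λ)) = 0. -/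
/-!
If `T z` were invertible for every `z` in the closure of `U`, then `z ↦ (T z)⁻¹` would be
holomorphic on `U` and continuous up to its boundary. A boundary point of `U` lies outside the
(open) pseudospectrum, so there `‖(T z)⁻¹‖ ≤ ε⁻¹`; by the maximum modulus principle the same bound
holds on all of `U`, which contradicts `U ⊆ Λ_ε`.
-/

open Set Metric

open scoped Ring

section BanachAlgebra

variable {R : Type*} [NormedRing R]

theorem IsUnit.of_norm_ringInverse_mul_norm_sub_lt_one [HasSummableGeomSeries R] {x y : R}
    (hx : IsUnit x) (h : ‖x⁻¹ʳ‖ * ‖y - x‖ < 1) : IsUnit y := by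
  obtain ⟨u, rfl⟩ := hx
  rw [Ring.inverse_unit] at h
  have ht : ‖-(↑u⁻¹ * (y - u))‖ < 1 := (norm_neg _).trans_lt ((norm_mul_le _ _).trans_lt h)
  have hy : (u : R) * (1 - -(↑u⁻¹ * (y - u))) = y := by
    rw [sub_neg_eq_add, mul_add, mul_one, ← mul_assoc, u.mul_inv, one_mul, add_sub_cancel]
  exact hy ▸ (u * Units.oneSub _ ht).isUnit

theorem isOpen_setOf_not_isUnit_or_lt_norm_ringInverse [HasSummableGeomSeries R] {ε : ℝ}
    (hε : 0 < ε) : IsOpen {x : R | ¬IsUnit x ∨ ε⁻¹ < ‖x⁻¹ʳ‖} := by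
  refine isOpen_iff_mem_nhds.2 fun x hx => ?_
  by_cases hu : IsUnit x
  · have hlt : ε⁻¹ < ‖x⁻¹ʳ‖ := hx.resolve_left (not_not.2 hu)
    have hcont : ContinuousAt (fun y : R => ‖y⁻¹ʳ‖) x := by
      obtain ⟨u, rfl⟩ := hu
      exact (NormedRing.inverse_continuousAt u).norm
    filter_upwards [hcont.eventually (eventually_gt_nhds hlt)] with y hy using Or.inr hy
  · filter_upwards [ball_mem_nhds x hε] with y hy
    by_contra! ⟨hyu, hyle⟩
    refine hu (hyu.of_norm_ringInverse_mul_norm_sub_lt_one ?_)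
    calc ‖y⁻¹ʳ‖ * ‖x - y‖ ≤ ε⁻¹ * ‖x - y‖ := by gcongr
      _ < ε⁻¹ * ε := by gcongr; rwa [← dist_eq_norm, dist_comm]
      _ = 1 := inv_mul_cancel₀ hε.ne'

def pseudospectrum (A : ℂ → R) (Ω : Set ℂ) (ε : ℝ) : Set ℂ :=
  {z ∈ Ω | ¬IsUnit (A z) ∨ ε⁻¹ < ‖(A z)⁻¹ʳ‖}

theorem isOpen_pseudospectrum [HasSummableGeomSeries R] {A : ℂ → R} {Ω : Set ℂ} {ε : ℝ}
    (hΩ : IsOpen Ω) (hA : ContinuousOn A Ω) (hε : 0 < ε) : IsOpen (pseudospectrum A Ω ε) :=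
  hA.isOpen_inter_preimage hΩ (isOpen_setOf_not_isUnit_or_lt_norm_ringInverse hε)

end BanachAlgebra

theorem disjoint_frontier_connectedComponentIn {X : Type*} [TopologicalSpace X]
    [LocallyConnectedSpace X] {S : Set X} (hS : IsOpen S) (x : X) :
    Disjoint (frontier (connectedComponentIn S x)) S := by
  refine disjoint_left.2 fun z hz hzS => ?_
  rw [hS.connectedComponentIn.frontier_eq] at hz
  obtain ⟨y, hyz, hyx⟩ := mem_closure_iff_nhds.1 hz.1 _
    (connectedComponentIn_mem_nhds (hS.mem_nhds hzS))
  refine hz.2 ?_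
  rw [connectedComponentIn_eq hyx, ← connectedComponentIn_eq hyz]
  exact mem_connectedComponentIn hzS

theorem exists_not_isUnit_mem_connectedComponentIn_pseudospectrum {R : Type*} [NormedRing R]
    [NormedAlgebra ℂ R] [CompleteSpace R] {A : ℂ → R} {Ω : Set ℂ} {ε : ℝ} {x : ℂ}
    (hΩ : IsOpen Ω) (hA : DifferentiableOn ℂ A Ω) (hε : 0 < ε)
    (hx : x ∈ pseudospectrum A Ω ε)
    (hUb : Bornology.IsBounded (connectedComponentIn (pseudospectrum A Ω ε) x))
    (hUΩ : closure (connectedComponentIn (pseudospectrum A Ω ε) x) ⊆ Ω) :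
    ∃ z ∈ connectedComponentIn (pseudospectrum A Ω ε) x, ¬IsUnit (A z) := by
  set U := connectedComponentIn (pseudospectrum A Ω ε) x
  by_contra! hunit
  have hfrontier : ∀ z ∈ frontier U, IsUnit (A z) ∧ ‖(A z)⁻¹ʳ‖ ≤ ε⁻¹ := fun z hz => by
    have hzS : z ∉ pseudospectrum A Ω ε := disjoint_left.1
      (disjoint_frontier_connectedComponentIn (isOpen_pseudospectrum hΩ hA.continuousOn hε) x) hz
    simpa [pseudospectrum, hUΩ (frontier_subset_closure hz)] using hzS
  have hunit_closure : ∀ z ∈ closure U, IsUnit (A z) := fun z hz => by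
    rw [closure_eq_self_union_frontier] at hz
    exact hz.elim (hunit z) fun hz => (hfrontier z hz).1
  have hinv : DiffContOnCl ℂ (fun z => (A z)⁻¹ʳ) U := DifferentiableOn.diffContOnCl fun z hz =>
    (hA.mono hUΩ z hz).inverse (hunit_closure z hz)
  have hbound : ‖(A x)⁻¹ʳ‖ ≤ ε⁻¹ := Complex.norm_le_of_forall_mem_frontier_norm_le hUb hinv
    (fun z hz => (hfrontier z hz).2) (subset_closure (mem_connectedComponentIn hx))
  exact (hx.2.resolve_left (not_not.2 (hunit x (mem_connectedComponentIn hx)))).not_ge hbound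

section Matrix

open scoped Matrix.Norms.L2Operator

theorem MatAnalyticOn.differentiableOn {n : ℕ} {T : ℂ → Matrix (Fin n) (Fin n) ℂ} {Ω : Set ℂ}
    (hT : MatAnalyticOn T Ω) : DifferentiableOn ℂ T Ω := by
  have hsum : T = fun w => ∑ i, ∑ j, T w i j • Matrix.single i j (1 : ℂ) := funext fun w => by
    simp only [Matrix.smul_single, smul_eq_mul, mul_one]
    exact Matrix.matrix_eq_sum_single (T w)
  rw [hsum]
  exact fun z hz => (DifferentiableAt.fun_sum fun i _ => DifferentiableAt.fun_sum fun j _ =>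
    (hT i j z hz).differentiableAt.smul_const _).differentiableWithinAt

theorem pspec_eq_pseudospectrum {n : ℕ} (T : ℂ → Matrix (Fin n) (Fin n) ℂ) (Ω : Set ℂ)
    (ε : ℝ) : pspec T Ω ε = pseudospectrum T Ω ε := by
  simp only [pspec, pseudospectrum, l2norm, ← Matrix.cstar_norm_def,
    Matrix.nonsing_inv_eq_ringInverse]

end Matrix

theorem stmt_8_general {n : ℕ} {Ω : Set ℂ} (hΩo : IsOpen Ω)
    (T : ℂ → Matrix (Fin n) (Fin n) ℂ) (hT : MatAnalyticOn T Ω)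
    (ε : ℝ) (hε : 0 < ε)
    {U : Set ℂ} (hUcc : ∃ x ∈ pspec T Ω ε, U = connectedComponentIn (pspec T Ω ε) x)
    (hUb : Bornology.IsBounded U) (hUΩ : closure U ⊆ Ω) :
    ∃ lam ∈ U, (T lam).det = 0 := by
  obtain ⟨x, hx, rfl⟩ := hUcc
  rw [pspec_eq_pseudospectrum] at hx hUb hUΩ ⊢
  open scoped Matrix.Norms.L2Operator in
  obtain ⟨z, hzU, hz⟩ := exists_not_isUnit_mem_connectedComponentIn_pseudospectrum hΩo
    hT.differentiableOn hε hx hUb hUΩ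
  exact ⟨z, hzU, by simpa [Matrix.isUnit_iff_isUnit_det] using hz⟩

/-- a bounded connected component of the `ε`-pseudospectrum whose closure is
contained in `Ω` contains an eigenvalue of `T`. -/
theorem stmt_8 {n : ℕ} (hn : 0 < n) {Ω : Set ℂ} (hΩo : IsOpen Ω) (hΩc : IsConnected Ω)
    (T : ℂ → Matrix (Fin n) (Fin n) ℂ) (hT : MatAnalyticOn T Ω)
    (ε : ℝ) (hε : 0 < ε)
    {U : Set ℂ} (hUcc : ∃ x ∈ pspec T Ω ε, U = connectedComponentIn (pspec T Ω ε) x)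
    (hUb : Bornology.IsBounded U) (hUΩ : closure U ⊆ Ω) :
    ∃ lam ∈ U, (T lam).det = 0 :=
  stmt_8_general hΩo T hT ε hε hUcc hUb hUΩ
end

section
/- Let A ∈ ℂ^{n×n} and let V ∈ ℂ^{n×n} be invertible such that each column v_i of V has unit Euclidean norm and satisfies A·v_i = λ_i·v_i for scalars λ_1, …, λ_n; let w_i* denote the i-th row of V⁻¹ (so that w_i*·v_i = 1). Let F be a fixed entrywise-nonnegative real n×n matrix, let E : Ω → ℂ^{n×n} be analytic with |E(z)_{ij}| ≤ F_{ij} for all z ∈ Ω and all indices i, j, and set T(z) = A − zI + E(z). If λ ∈ Ω satisfies det(T(λ)) = 0, then there exists an index i such that |λ − λ_i| ≤ n · ‖F‖₂ · ‖w_i‖₂, where ‖F‖₂ is the spectral norm of F and ‖w_i‖₂ is the Euclidean norm of the i-th row of V⁻¹. -/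
open Set Metric

/-! Let `x = V y` span the kernel of `T(λ)`. In the eigenbasis the equation `(A + E(λ)) x = λ x`
reads `(λ - λᵢ) yᵢ = wᵢ* E(λ) x`, so `|λ - λᵢ| |yᵢ| ≤ ‖wᵢ‖₂ ‖E(λ)‖₂ ‖x‖₂` by Cauchy–Schwarz.
Since the columns of `V` are unit vectors, `‖x‖₂ ≤ ∑ⱼ |yⱼ| ≤ n |yᵢ|` for `i` maximizing `|yᵢ|`,
and `‖E(λ)‖₂ ≤ ‖F‖₂` because `|E(λ)| ≤ F` entrywise. -/

open Matrix

lemma EuclideanSpace.norm_le_norm_of_forall_norm_le {ι 𝕜 𝕜' : Type*} [Fintype ι]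
    [RCLike 𝕜] [RCLike 𝕜'] {x : EuclideanSpace 𝕜 ι} {y : EuclideanSpace 𝕜' ι}
    (h : ∀ i, ‖x i‖ ≤ ‖y i‖) : ‖x‖ ≤ ‖y‖ := by
  rw [EuclideanSpace.norm_eq, EuclideanSpace.norm_eq]
  gcongr with i
  exact h i

section EuclideanNorms

variable {n : ℕ}

lemma e2norm_eq_norm_toLp (v : Fin n → ℂ) : e2norm v = ‖WithLp.toLp 2 v‖ := by
  rw [EuclideanSpace.norm_eq]
  rfl

lemma e2norm_nonneg (v : Fin n → ℂ) : 0 ≤ e2norm v := Real.sqrt_nonneg _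

lemma e2norm_mulVec_le (M : Matrix (Fin n) (Fin n) ℂ) (x : Fin n → ℂ) :
    e2norm (M *ᵥ x) ≤ l2norm M * e2norm x := by
  simpa only [e2norm_eq_norm_toLp, l2norm, toEuclideanCLM_toLp]
    using (toEuclideanCLM (𝕜 := ℂ) M).le_opNorm (WithLp.toLp 2 x)

lemma norm_dotProduct_le_e2norm_mul (a b : Fin n → ℂ) : ‖a ⬝ᵥ b‖ ≤ e2norm a * e2norm b :=
  calc ‖∑ k, a k * b k‖ ≤ ∑ k, ‖a k‖ * ‖b k‖ := norm_sum_le_of_le _ fun _ _ => (norm_mul _ _).le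
    _ ≤ e2norm a * e2norm b := Real.sum_mul_le_sqrt_mul_sqrt _ _ _

lemma e2norm_mulVec_le_sum_norm {V : Matrix (Fin n) (Fin n) ℂ}
    (hcols : ∀ i, e2norm (fun k => V k i) = 1) (y : Fin n → ℂ) :
    e2norm (V *ᵥ y) ≤ ∑ i, ‖y i‖ := by
  have hcomb : V *ᵥ y = ∑ i, y i • fun k => V k i := by
    ext k
    simp [mulVec, dotProduct, mul_comm]
  rw [e2norm_eq_norm_toLp, hcomb, WithLp.toLp_sum]
  refine norm_sum_le_of_le _ fun i _ => ?_
  rw [WithLp.toLp_smul, norm_smul, ← e2norm_eq_norm_toLp, hcols i, mul_one]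

lemma l2norm_le_l2normR_of_norm_le {M : Matrix (Fin n) (Fin n) ℂ}
    {F : Matrix (Fin n) (Fin n) ℝ} (h : ∀ i j, ‖M i j‖ ≤ F i j) : l2norm M ≤ l2normR F := by
  refine ContinuousLinearMap.opNorm_le_bound _ (norm_nonneg _) fun x => ?_
  let absx : EuclideanSpace ℝ (Fin n) := WithLp.toLp 2 fun j => ‖x j‖
  have habsx : ‖absx‖ = ‖x‖ :=
    le_antisymm (EuclideanSpace.norm_le_norm_of_forall_norm_le fun i => by simp [absx])
      (EuclideanSpace.norm_le_norm_of_forall_norm_le fun i => by simp [absx])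
  have hentry : ∀ i, ‖toEuclideanCLM (𝕜 := ℂ) M x i‖ ≤ ‖toEuclideanCLM (𝕜 := ℝ) F absx i‖ := by
    intro i
    calc ‖toEuclideanCLM (𝕜 := ℂ) M x i‖ = ‖∑ j, M i j * x j‖ := by
          simp [mulVec, dotProduct]
      _ ≤ ∑ j, F i j * ‖x j‖ :=
          norm_sum_le_of_le _ fun j _ => by
            rw [norm_mul]
            exact mul_le_mul_of_nonneg_right (h i j) (norm_nonneg _)
      _ ≤ ‖toEuclideanCLM (𝕜 := ℝ) F absx i‖ := by
          simpa [absx, ← toEuclideanCLM_toLp, mulVec, dotProduct] using le_abs_self _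
  calc ‖toEuclideanCLM (𝕜 := ℂ) M x‖ ≤ ‖toEuclideanCLM (𝕜 := ℝ) F absx‖ :=
        EuclideanSpace.norm_le_norm_of_forall_norm_le hentry
    _ ≤ l2normR F * ‖x‖ := habsx ▸ (toEuclideanCLM (𝕜 := ℝ) F).le_opNorm absx

end EuclideanNorms

section BauerFike

variable {n : ℕ} {A V : Matrix (Fin n) (Fin n) ℂ} {lams : Fin n → ℂ}

lemma mul_eq_mul_diagonal_of_mulVec_col
    (heig : ∀ i, A *ᵥ (fun k => V k i) = lams i • fun k => V k i) :
    A * V = V * diagonal lams := by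
  ext k i
  rw [mul_diagonal, mul_apply, mul_comm]
  simpa [mulVec, dotProduct] using congrFun (heig i) k

lemma inv_mul_eq_diagonal_mul_inv (hV : IsUnit V)
    (heig : ∀ i, A *ᵥ (fun k => V k i) = lams i • fun k => V k i) :
    V⁻¹ * A = diagonal lams * V⁻¹ := by
  have hVdet : IsUnit V.det := (isUnit_iff_isUnit_det V).1 hV
  calc V⁻¹ * A = V⁻¹ * (A * V) * V⁻¹ := by
        rw [Matrix.mul_assoc, Matrix.mul_assoc, mul_nonsing_inv V hVdet, Matrix.mul_one]
    _ = diagonal lams * V⁻¹ := by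
        rw [mul_eq_mul_diagonal_of_mulVec_col heig, ← Matrix.mul_assoc,
          nonsing_inv_mul V hVdet, Matrix.one_mul]

lemma sub_mul_inv_mulVec_apply (hV : IsUnit V)
    (heig : ∀ i, A *ᵥ (fun k => V k i) = lams i • fun k => V k i)
    {P : Matrix (Fin n) (Fin n) ℂ} {lam : ℂ} {x : Fin n → ℂ} (hx : (A + P) *ᵥ x = lam • x)
    (i : Fin n) : (lam - lams i) * (V⁻¹ *ᵥ x) i = (V⁻¹ *ᵥ (P *ᵥ x)) i := by
  have hdiag : V⁻¹ *ᵥ (A *ᵥ x) = diagonal lams *ᵥ (V⁻¹ *ᵥ x) := by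
    rw [mulVec_mulVec, mulVec_mulVec, inv_mul_eq_diagonal_mul_inv hV heig]
  have h := congrArg (fun v => (V⁻¹ *ᵥ v) i) hx
  simp only [add_mulVec, mulVec_add, hdiag, mulVec_diagonal, mulVec_smul, Pi.add_apply,
    Pi.smul_apply, smul_eq_mul] at h
  linear_combination -h

theorem exists_norm_sub_le_of_add_mulVec_eq_smul (hV : IsUnit V)
    (hcols : ∀ i, e2norm (fun k => V k i) = 1)
    (heig : ∀ i, A *ᵥ (fun k => V k i) = lams i • fun k => V k i)
    {P : Matrix (Fin n) (Fin n) ℂ} {lam : ℂ} {x : Fin n → ℂ} (hx0 : x ≠ 0)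
    (hx : (A + P) *ᵥ x = lam • x) :
    ∃ i, ‖lam - lams i‖ ≤ n * l2norm P * e2norm (fun k => V⁻¹ i k) := by
  set y := V⁻¹ *ᵥ x
  have hxy : x = V *ᵥ y := by
    rw [mulVec_mulVec, mul_nonsing_inv V ((isUnit_iff_isUnit_det V).1 hV), one_mulVec]
  have hy0 : y ≠ 0 := fun h => hx0 (by rw [hxy, h, mulVec_zero])
  obtain ⟨j, hj⟩ := Function.ne_iff.1 hy0
  have : Nonempty (Fin n) := ⟨j⟩
  obtain ⟨i, hi⟩ := Finite.exists_max fun k => ‖y k‖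
  have hyi : 0 < ‖y i‖ := (norm_pos_iff.2 hj).trans_le (hi j)
  have hx_le : e2norm x ≤ n * ‖y i‖ :=
    calc e2norm x ≤ ∑ k, ‖y k‖ := hxy ▸ e2norm_mulVec_le_sum_norm hcols y
      _ ≤ ∑ _k : Fin n, ‖y i‖ := Finset.sum_le_sum fun k _ => hi k
      _ = n * ‖y i‖ := by simp
  refine ⟨i, le_of_mul_le_mul_right ?_ hyi⟩
  calc ‖lam - lams i‖ * ‖y i‖ = ‖(fun k => V⁻¹ i k) ⬝ᵥ (P *ᵥ x)‖ := by
        rw [← norm_mul, sub_mul_inv_mulVec_apply hV heig hx i]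
        rfl
    _ ≤ e2norm (fun k => V⁻¹ i k) * (l2norm P * e2norm x) :=
        (norm_dotProduct_le_e2norm_mul _ _).trans
          (mul_le_mul_of_nonneg_left (e2norm_mulVec_le P x) (e2norm_nonneg _))
    _ ≤ e2norm (fun k => V⁻¹ i k) * (l2norm P * (n * ‖y i‖)) := by
        gcongr
        · exact e2norm_nonneg _
        · exact norm_nonneg _
    _ = n * l2norm P * e2norm (fun k => V⁻¹ i k) * ‖y i‖ := by ring

end BauerFike

theorem stmt_14_general {n : ℕ} {Ω : Set ℂ}
    (A V : Matrix (Fin n) (Fin n) ℂ) (hV : IsUnit V)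
    (lams : Fin n → ℂ)
    (hcols : ∀ i, e2norm (fun k => V k i) = 1)
    (heig : ∀ i, A.mulVec (fun k => V k i) = lams i • (fun k => V k i))
    (F : Matrix (Fin n) (Fin n) ℝ)
    (E : ℂ → Matrix (Fin n) (Fin n) ℂ)
    (hEF : ∀ z ∈ Ω, ∀ i j, ‖E z i j‖ ≤ F i j)
    (T : ℂ → Matrix (Fin n) (Fin n) ℂ)
    (hTdef : T = fun z => A - z • (1 : Matrix (Fin n) (Fin n) ℂ) + E z)
    (lam : ℂ) (hlam : lam ∈ Ω) (hdet : (T lam).det = 0) :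
    ∃ i, ‖lam - lams i‖ ≤ n * l2normR F * e2norm (fun k => V⁻¹ i k) := by
  subst hTdef
  obtain ⟨x, hx0, hker⟩ := exists_mulVec_eq_zero_iff.2 hdet
  have hx : (A + E lam) *ᵥ x = lam • x := by
    rw [← sub_eq_zero, ← hker, add_mulVec, add_mulVec, sub_mulVec, smul_mulVec, one_mulVec]
    abel
  obtain ⟨i, hi⟩ := exists_norm_sub_le_of_add_mulVec_eq_smul hV hcols heig hx0 hx
  refine ⟨i, hi.trans ?_⟩
  gcongr
  · exact e2norm_nonneg _
  · exact l2norm_le_l2normR_of_norm_le (hEF lam hlam)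

/-- nonlinear Bauer–Fike theorem (inclusion part). Every eigenvalue of
`T(z) = A - zI + E(z)`, with `A` diagonalized by `V` (unit-norm columns) and
`|E(z)| ≤ F` entrywise, lies within distance `n ‖F‖₂ ‖wᵢ‖₂` of some eigenvalue `λᵢ`,
where `wᵢ*` is the `i`-th row of `V⁻¹`. -/
theorem stmt_14 {n : ℕ} (hn : 0 < n) {Ω : Set ℂ} (hΩo : IsOpen Ω) (hΩc : IsConnected Ω)
    (A V : Matrix (Fin n) (Fin n) ℂ) (hV : IsUnit V)
    (lams : Fin n → ℂ)
    (hcols : ∀ i, e2norm (fun k => V k i) = 1)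
    (heig : ∀ i, A.mulVec (fun k => V k i) = lams i • (fun k => V k i))
    (F : Matrix (Fin n) (Fin n) ℝ) (hF : ∀ i j, 0 ≤ F i j)
    (E : ℂ → Matrix (Fin n) (Fin n) ℂ) (hE : MatAnalyticOn E Ω)
    (hEF : ∀ z ∈ Ω, ∀ i j, ‖E z i j‖ ≤ F i j)
    (T : ℂ → Matrix (Fin n) (Fin n) ℂ)
    (hTdef : T = fun z => A - z • (1 : Matrix (Fin n) (Fin n) ℂ) + E z)
    (lam : ℂ) (hlam : lam ∈ Ω) (hdet : (T lam).det = 0) :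
    ∃ i, ‖lam - lams i‖ ≤ n * l2normR F * e2norm (fun k => V⁻¹ i k) :=
  stmt_14_general A V hV lams hcols heig F E hEF T hTdef lam hlam hdet
end

section
/- Let β, λ̂, w ∈ ℂ satisfy β·exp(λ̂) + λ̂² = 0. Then |β·exp(λ̂ + w) + (λ̂ + w)² − λ̂(2 − λ̂)·w| ≤ (1 + (|λ̂|²/2)·exp(|w|)) · |w|². -/
open Set Metric

/-!
Since `β e^λ̂ = -λ̂²`, the shifted function satisfies
`f(λ̂ + w) - λ̂(2 - λ̂) w = w² - λ̂² (e^w - 1 - w)`. The Taylor remainder of `exp` after `n` terms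
is bounded by `|w|^n/n! · e^|w|`, since `n! m! ≤ (n+m)!` lets the term `w^(n+m)/(n+m)!` of its
series be dominated by `|w|^n/n! · |w|^m/m!`; take `n = 2`.
-/

open Finset
open scoped Nat

theorem Complex.norm_exp_sub_sum_le_pow_div_factorial_mul_exp (x : ℂ) (n : ℕ) :
    ‖Complex.exp x - ∑ m ∈ range n, x ^ m / (m ! : ℂ)‖ ≤ ‖x‖ ^ n / n ! * Real.exp ‖x‖ := by
  have hexp : HasSum (fun m => x ^ m / m !) (Complex.exp x) := by
    rw [Complex.exp_eq_exp_ℂ]; exact NormedSpace.expSeries_div_hasSum_exp x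
  have htail : HasSum (fun m => x ^ (m + n) / (m + n)!)
      (Complex.exp x - ∑ m ∈ range n, x ^ m / (m ! : ℂ)) := (hasSum_nat_add_iff' n).2 hexp
  have hexpR : HasSum (fun m => ‖x‖ ^ n / n ! * (‖x‖ ^ m / m !))
      (‖x‖ ^ n / n ! * Real.exp ‖x‖) := by
    rw [Real.exp_eq_exp_ℝ]; exact (NormedSpace.expSeries_div_hasSum_exp ‖x‖).mul_left _
  refine htail.norm_le_of_bounded hexpR fun m => ?_
  have hfac : (n ! * m ! : ℝ) ≤ (n + m)! := by
    exact_mod_cast Nat.le_of_dvd (Nat.factorial_pos _)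
      (Nat.factorial_mul_factorial_dvd_factorial_add n m)
  rw [norm_div, norm_pow, Complex.norm_natCast, div_mul_div_comm, ← pow_add, add_comm m n]
  gcongr

/-- Taylor remainder bound for `f(z) = β exp(z) + z²` at a zero `λ̂`:
`|f(λ̂ + w) - λ̂(2 - λ̂)w| ≤ (1 + (|λ̂|²/2) exp|w|) |w|²`. -/
theorem stmt_17 (β lamh w : ℂ) (hzero : β * Complex.exp lamh + lamh ^ 2 = 0) :
    ‖β * Complex.exp (lamh + w) + (lamh + w) ^ 2 - lamh * (2 - lamh) * w‖ ≤
      (1 + ‖lamh‖ ^ 2 / 2 * Real.exp ‖w‖) * ‖w‖ ^ 2 := by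
  have hshift : β * Complex.exp (lamh + w) + (lamh + w) ^ 2 - lamh * (2 - lamh) * w
      = w ^ 2 - lamh ^ 2 * (Complex.exp w - 1 - w) := by
    rw [Complex.exp_add]
    linear_combination Complex.exp w * hzero
  have hremainder : ‖Complex.exp w - 1 - w‖ ≤ ‖w‖ ^ 2 / 2 * Real.exp ‖w‖ := by
    simpa [sum_range_succ, sub_sub] using
      Complex.norm_exp_sub_sum_le_pow_div_factorial_mul_exp w 2
  rw [hshift]
  calc ‖w ^ 2 - lamh ^ 2 * (Complex.exp w - 1 - w)‖
      ≤ ‖w‖ ^ 2 + ‖lamh‖ ^ 2 * ‖Complex.exp w - 1 - w‖ := by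
        rw [← norm_pow, ← norm_pow, ← norm_mul]
        exact norm_sub_le _ _
    _ ≤ ‖w‖ ^ 2 + ‖lamh‖ ^ 2 * (‖w‖ ^ 2 / 2 * Real.exp ‖w‖) := by gcongr
    _ = (1 + ‖lamh‖ ^ 2 / 2 * Real.exp ‖w‖) * ‖w‖ ^ 2 := by ring
end
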